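/- arXiv:1609.00337 — 4 statements merged into one kernel-verified Lean document; each statement's English description precedes it below -/
import Mathlib

section
/- Let $m_{ij}$ for $0\le i<j\le 3$ be positive integers satisfying $m_{st}\le m_{su}+m_{tu}+1$ for all triples $s,t,u$, and suppose no vertex $i$ is free, meaning for each $i$ there exist $j,k$ distinct from $i$ with $m_{jk}\le m_{ij}+m_{ik}-2$. Then for every triple $\{i,j,k\}\subset\{0,1,2,3\}$, $2|\mathbf m|\ge 3(m_{ij}+m_{ik}+m_{jk})$, where $|\mathbf m|=\sum_{0\le i<j\le 3} m_{ij}$. -/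
set_option maxHeartbeats 2000000 in
theorem stmt5 (m : Fin 4 → Fin 4 → ℤ)
    (hsymm : ∀ i j, m i j = m j i)
    (hpos : ∀ i j, i ≠ j → 1 ≤ m i j)
    (hnofree : ∀ i : Fin 4, ∃ j k : Fin 4, j ≠ i ∧ k ≠ i ∧ j ≠ k ∧
      m j k ≤ m i j + m i k - 2)
    (hineq : ∀ s t u : Fin 4, s ≠ t → t ≠ u → s ≠ u →
      m s t ≤ m s u + m t u + 1)
    (M : ℤ) (hM : M = m 0 1 + m 0 2 + m 0 3 + m 1 2 + m 1 3 + m 2 3) :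
    ∀ i j k : Fin 4, i ≠ j → j ≠ k → i ≠ k →
      2 * M ≥ 3 * (m i j + m i k + m j k) := by
  have s10 : m 1 0 = m 0 1 := hsymm 1 0
  have s20 : m 2 0 = m 0 2 := hsymm 2 0
  have s30 : m 3 0 = m 0 3 := hsymm 3 0
  have s21 : m 2 1 = m 1 2 := hsymm 2 1
  have s31 : m 3 1 = m 1 3 := hsymm 3 1
  have s32 : m 3 2 = m 2 3 := hsymm 3 2
  have d0 : m 1 2 ≤ m 0 1 + m 0 2 - 2 ∨ m 1 3 ≤ m 0 1 + m 0 3 - 2 ∨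
      m 2 3 ≤ m 0 2 + m 0 3 - 2 := by
    obtain ⟨a, b, ha, hb, hab, h⟩ := hnofree 0
    clear hnofree hpos hsymm hineq
    fin_cases a <;> fin_cases b <;> simp_all <;> omega
  have d1 : m 0 2 ≤ m 0 1 + m 1 2 - 2 ∨ m 0 3 ≤ m 0 1 + m 1 3 - 2 ∨
      m 2 3 ≤ m 1 2 + m 1 3 - 2 := by
    obtain ⟨a, b, ha, hb, hab, h⟩ := hnofree 1
    clear hnofree hpos hsymm hineq
    fin_cases a <;> fin_cases b <;> simp_all <;> omega
  have d2 : m 0 1 ≤ m 0 2 + m 1 2 - 2 ∨ m 0 3 ≤ m 0 2 + m 2 3 - 2 ∨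
      m 1 3 ≤ m 1 2 + m 2 3 - 2 := by
    obtain ⟨a, b, ha, hb, hab, h⟩ := hnofree 2
    clear hnofree hpos hsymm hineq
    fin_cases a <;> fin_cases b <;> simp_all <;> omega
  have d3 : m 0 1 ≤ m 0 3 + m 1 3 - 2 ∨ m 0 2 ≤ m 0 3 + m 2 3 - 2 ∨
      m 1 2 ≤ m 1 3 + m 2 3 - 2 := by
    obtain ⟨a, b, ha, hb, hab, h⟩ := hnofree 3
    clear hnofree hpos hsymm hineq
    fin_cases a <;> fin_cases b <;> simp_all <;> omega
  have q1 : m 0 1 ≤ m 0 2 + m 1 2 + 1 := hineq 0 1 2 (by decide) (by decide) (by decide)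
  have q2 : m 0 1 ≤ m 0 3 + m 1 3 + 1 := hineq 0 1 3 (by decide) (by decide) (by decide)
  have q3 : m 0 2 ≤ m 0 1 + m 2 1 + 1 := hineq 0 2 1 (by decide) (by decide) (by decide)
  have q4 : m 0 2 ≤ m 0 3 + m 2 3 + 1 := hineq 0 2 3 (by decide) (by decide) (by decide)
  have q5 : m 0 3 ≤ m 0 1 + m 3 1 + 1 := hineq 0 3 1 (by decide) (by decide) (by decide)
  have q6 : m 0 3 ≤ m 0 2 + m 3 2 + 1 := hineq 0 3 2 (by decide) (by decide) (by decide)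
  have q7 : m 1 2 ≤ m 1 0 + m 2 0 + 1 := hineq 1 2 0 (by decide) (by decide) (by decide)
  have q8 : m 1 2 ≤ m 1 3 + m 2 3 + 1 := hineq 1 2 3 (by decide) (by decide) (by decide)
  have q9 : m 1 3 ≤ m 1 0 + m 3 0 + 1 := hineq 1 3 0 (by decide) (by decide) (by decide)
  have q10 : m 1 3 ≤ m 1 2 + m 3 2 + 1 := hineq 1 3 2 (by decide) (by decide) (by decide)
  have q11 : m 2 3 ≤ m 2 0 + m 3 0 + 1 := hineq 2 3 0 (by decide) (by decide) (by decide)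
  have q12 : m 2 3 ≤ m 2 1 + m 3 1 + 1 := hineq 2 3 1 (by decide) (by decide) (by decide)
  clear hnofree hpos hsymm hineq
  have fc : ∀ x : Fin 4, x = 0 ∨ x = 1 ∨ x = 2 ∨ x = 3 := by decide
  intro i j k hij hjk hik
  rcases fc i with rfl | rfl | rfl | rfl <;>
    rcases fc j with rfl | rfl | rfl | rfl <;>
    rcases fc k with rfl | rfl | rfl | rfl <;>
    first
      | exact absurd rfl hij
      | exact absurd rfl hjk
      | exact absurd rfl hik
      | omega
end

section
/- Let $m_{ij}$ for $0\le i<j\le 3$ be positive integers such that no vertex is free and such that $m_{st}\le m_{su}+m_{tu}+1$ for all triples. Set $\Omega_{ijk}=\lfloor (m_{ij}+m_{ik}+m_{jk}-3)/2\rfloor+1$. Then $\lfloor (2|\mathbf m|-9)/6\rfloor \ge \Omega_{ijk}-1$ for each triple $\{i,j,k\}$. -/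
lemma fin4cases (x : Fin 4) : x = 0 ∨ x = 1 ∨ x = 2 ∨ x = 3 := by
  have h := Finset.mem_univ x
  rw [show (Finset.univ : Finset (Fin 4)) = {0,1,2,3} by decide] at h
  simpa using h

lemma fourth_exists : ∀ i j k : Fin 4, i ≠ j → j ≠ k → i ≠ k →
    ∃ l : Fin 4, l ≠ i ∧ l ≠ j ∧ l ≠ k := by decide

lemma cover_lemma : ∀ i j k l x : Fin 4, i ≠ j → j ≠ k → i ≠ k →
    l ≠ i → l ≠ j → l ≠ k → x ≠ l → x = i ∨ x = j ∨ x = k := by decide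

set_option maxHeartbeats 1000000 in
lemma sum_perm (m : Fin 4 → Fin 4 → ℤ) (hsymm : ∀ i j, m i j = m j i) :
    ∀ i j k l : Fin 4, i ≠ j → j ≠ k → i ≠ k → l ≠ i → l ≠ j → l ≠ k →
    m i j + m i k + m j k + m i l + m j l + m k l =
      m 0 1 + m 0 2 + m 0 3 + m 1 2 + m 1 3 + m 2 3 := by
  intro i j k l h1 h2 h3 h4 h5 h6
  rcases fin4cases i with rfl|rfl|rfl|rfl <;>
  rcases fin4cases j with rfl|rfl|rfl|rfl <;>
  rcases fin4cases k with rfl|rfl|rfl|rfl <;>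
  rcases fin4cases l with rfl|rfl|rfl|rfl <;>
    first
    | exact absurd rfl h1 | exact absurd rfl h2 | exact absurd rfl h3
    | exact absurd rfl h4 | exact absurd rfl h5 | exact absurd rfl h6
    | linarith [hsymm 1 0, hsymm 2 0, hsymm 2 1, hsymm 3 0, hsymm 3 1, hsymm 3 2]

lemma key (m : Fin 4 → Fin 4 → ℤ) (hsymm : ∀ i j, m i j = m j i)
    (hnofree : ∀ i : Fin 4, ∃ j k : Fin 4, j ≠ i ∧ k ≠ i ∧ j ≠ k ∧
      m j k ≤ m i j + m i k - 2)
    (hineq : ∀ s t u : Fin 4, s ≠ t → t ≠ u → s ≠ u →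
      m s t ≤ m s u + m t u + 1)
    (i j k l : Fin 4) (hij : i ≠ j) (hjk : j ≠ k) (hik : i ≠ k)
    (hli : l ≠ i) (hlj : l ≠ j) (hlk : l ≠ k) :
    m i j + m i k + m j k ≤ 2 * (m i l + m j l + m k l) := by
  obtain ⟨a, b, ha, hb, hab, hkey⟩ := hnofree l
  have hA := cover_lemma i j k l a hij hjk hik hli hlj hlk ha
  have hB := cover_lemma i j k l b hij hjk hik hli hlj hlk hb
  have t1 := hineq i j l hij hlj.symm hli.symm
  have t2 := hineq i k l hik hlk.symm hli.symm
  have t3 := hineq j k l hjk hlk.symm hlj.symm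
  have s1 := hsymm l i
  have s2 := hsymm l j
  have s3 := hsymm l k
  have s4 := hsymm i j
  have s5 := hsymm i k
  have s6 := hsymm j k
  rcases hA with rfl | rfl | rfl <;> rcases hB with rfl | rfl | rfl <;>
    first
    | exact absurd rfl hab
    | linarith

theorem stmt6 (m : Fin 4 → Fin 4 → ℤ)
    (hsymm : ∀ i j, m i j = m j i)
    (hpos : ∀ i j, i ≠ j → 1 ≤ m i j)
    (hnofree : ∀ i : Fin 4, ∃ j k : Fin 4, j ≠ i ∧ k ≠ i ∧ j ≠ k ∧
      m j k ≤ m i j + m i k - 2)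
    (hineq : ∀ s t u : Fin 4, s ≠ t → t ≠ u → s ≠ u →
      m s t ≤ m s u + m t u + 1)
    (M : ℤ) (hM : M = m 0 1 + m 0 2 + m 0 3 + m 1 2 + m 1 3 + m 2 3) :
    ∀ i j k : Fin 4, i ≠ j → j ≠ k → i ≠ k →
      ⌊(2 * (M : ℚ) - 9) / 6⌋ ≥
        (⌊((m i j + m i k + m j k : ℤ) - 3 : ℚ) / 2⌋ + 1) - 1 := by
  intro i j k hij hjk hik
  obtain ⟨l, hli, hlj, hlk⟩ := fourth_exists i j k hij hjk hik
  have hperm := sum_perm m hsymm i j k l hij hjk hik hli hlj hlk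
  have hkey := key m hsymm hnofree hineq i j k l hij hjk hik hli hlj hlk
  set S : ℤ := m i j + m i k + m j k with hS
  have h2M : 3 * S ≤ 2 * M := by linarith
  have hfl : ⌊((S : ℚ) - 3) / 2⌋ = ⌊(3 * (S : ℚ) - 9) / 6⌋ := by
    congr 1; ring
  have hle : (3 * (S : ℚ) - 9) / 6 ≤ (2 * (M : ℚ) - 9) / 6 := by
    have : (3 * (S : ℚ)) ≤ 2 * (M : ℚ) := by exact_mod_cast h2M
    linarith
  have hmono := Int.floor_le_floor hle
  push_cast
  push_cast at hfl hmono
  omega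
end

section
/- Let $G=K_3$ with edge multiplicities, $S=\mathbb{K}[x_0,x_1,x_2]$, and let $J=\langle (x_0-x_1)^{m_{01}},(x_0-x_2)^{m_{02}},(x_1-x_2)^{m_{12}}\rangle$. Then the module of multiderivations $D(\mathcal{A}_{K_3},\mathbf m)=\{\theta\in\bigoplus_i S\partial_i : \theta(x_i-x_j)\in\langle(x_i-x_j)^{m_{ij}}\rangle\}$ is isomorphic as an $S$-module to $S\oplus \mathrm{syz}(J)$, where $\mathrm{syz}(J)$ is the module of syzygies on the three listed generators. In particular $D(\mathcal{A}_{K_3},\mathbf m)$ is free for every choice of multiplicities. -/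
/-!
The map `(s, g) ↦ (s, s - g₀ (x₀ - x₁)^m₀₁, s + g₁ (x₀ - x₂)^m₀₂)` is an isomorphism
`S × syz(J) ≃ D`, so everything reduces to the freeness of `syz(J)`.

The generators of `J` are `u^a, v^b, (v - u)^c` with `u = x₀ - x₁`, `v = x₀ - x₂`. In `K[u, v]`
we build, by induction on the exponents, two homogeneous syzygies `σ₁, σ₂` of these three forms
with `σ₁ × σ₂` a unit multiple of the vector of generators (Hilbert–Burch). Multiplying the
third generator by a linear form `ℓ` preserves this: modulo `ℓ` every form of degree `e` is a
scalar times `z^e`, so the third entry of one `σᵢ` divides that of the other modulo `ℓ`, and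
subtracting a multiple yields a syzygy whose third entry is divisible by `ℓ`. Mapped to
`K[x₀, x₁, x₂]`, the cross-product identity and Cramer's rule, together with the coprimality of
`(x₁ - x₂)^c` and `(x₀ - x₁)^a`, show that `σ₁, σ₂` is a basis of `syz(J)`.
-/

open MvPolynomial Matrix

theorem Finsupp.weight_one_int_eq_degree {σ : Type*} (d : σ →₀ ℕ) :
    Finsupp.weight (1 : σ → ℤ) d = d.degree := by
  simp [Finsupp.weight_apply, Finsupp.degree_apply, Finsupp.sum]

namespace MvPolynomial

variable {σ R : Type*}

section CommRing
variable [CommRing R]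

theorem dvd_sub_aeval {ℓ : MvPolynomial σ R} {s : σ → MvPolynomial σ R}
    (hs : ∀ i, ℓ ∣ X i - s i) (P : MvPolynomial σ R) : ℓ ∣ P - aeval s P := by
  rw [← Ideal.mem_span_singleton, ← Ideal.Quotient.eq]
  have : (Ideal.Quotient.mkₐ R (Ideal.span {ℓ})).comp (aeval s) = Ideal.Quotient.mkₐ R _ := by
    ext i
    simpa [Ideal.Quotient.eq, Ideal.mem_span_singleton, dvd_sub_comm] using hs i
  exact (DFunLike.congr_fun this P).symm

theorem not_dvd_of_eval_eq_zero {P Q : MvPolynomial σ R} {x : σ → R} (hP : eval x P = 0)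
    (hQ : eval x Q ≠ 0) : ¬ P ∣ Q :=
  fun h => hQ (zero_dvd_iff.mp (hP ▸ map_dvd (eval x) h))

theorem IsWeightedHomogeneous.aeval_C_mul {P : MvPolynomial σ R} {n : ℕ}
    (hP : IsWeightedHomogeneous (1 : σ → ℤ) P n) (c : σ → R) (z : MvPolynomial σ R) :
    aeval (fun i => C (c i) * z) P = C (eval c P) * z ^ n := by
  induction hP using IsWeightedHomogeneous.induction_on with
  | zero => simp
  | add p q _ _ hp hq => rw [map_add, map_add, hp, hq, map_add, add_mul]
  | monomial d r hd =>
    rw [Finsupp.weight_one_int_eq_degree, Nat.cast_inj, Finsupp.degree_apply] at hd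
    simp only [aeval_monomial, eval_monomial, Finsupp.prod, mul_pow, Finset.prod_mul_distrib,
      Finset.prod_pow_eq_pow_sum, hd, map_mul, map_prod, map_pow, algebraMap_eq]
    ring

theorem IsWeightedHomogeneous.nonneg {P : MvPolynomial σ R} {n : ℤ}
    (hP : IsWeightedHomogeneous (1 : σ → ℤ) P n) (h0 : P ≠ 0) : 0 ≤ n := by
  obtain ⟨d, hd⟩ := ne_zero_iff.mp h0
  rw [← hP hd, Finsupp.weight_one_int_eq_degree]
  positivity

end CommRing

theorem weightedHomogeneousComponent_mul_of_left {M : Type*} [AddCancelCommMonoid M]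
    [DecidableEq M] [CommSemiring R] {w : σ → M} {ℓ : MvPolynomial σ R} {a : M}
    (hℓ : IsWeightedHomogeneous w ℓ a) (P : MvPolynomial σ R) (n : M) :
    weightedHomogeneousComponent w (a + n) (ℓ * P) = ℓ * weightedHomogeneousComponent w n P := by
  let := weightedGradedAlgebra R w
  simp only [← weightedDecomposition.decompose'_apply]
  exact DirectSum.coe_decompose_mul_add_of_left_mem _ hℓ

theorem IsWeightedHomogeneous.of_mul_left {M : Type*} [AddCancelCommMonoid M]
    [CommRing R] [IsDomain R] {w : σ → M}
    {ℓ P : MvPolynomial σ R} {a n : M} (hℓ : IsWeightedHomogeneous w ℓ a) (hℓ0 : ℓ ≠ 0)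
    (h : IsWeightedHomogeneous w (ℓ * P) (a + n)) : IsWeightedHomogeneous w P n := by
  classical
  intro d hd
  by_contra hne
  have hcomp : weightedHomogeneousComponent w (Finsupp.weight w d) P ≠ 0 := by
    rw [ne_zero_iff]
    exact ⟨d, by simpa [coeff_weightedHomogeneousComponent] using hd⟩
  refine hcomp ((mul_eq_zero.mp ?_).resolve_left hℓ0)
  rw [← weightedHomogeneousComponent_mul_of_left hℓ,
    h.weightedHomogeneousComponent_ne _ (fun h' => hne (add_left_cancel h'))]

theorem IsWeightedHomogeneous.mul_sub {M : Type*} [AddCommMonoid M] [CommRing R] {w : σ → M}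
    {p P Q : MvPolynomial σ R} {k m n : M} (hp : IsWeightedHomogeneous w p k)
    (hP : IsWeightedHomogeneous w P m) (hQ : IsWeightedHomogeneous w Q n) (h : k + m = n) :
    IsWeightedHomogeneous w (p * P - Q) n :=
  h ▸ (hp.mul hP).sub (h ▸ hQ)

section Field
variable {K : Type*} [Field K]

theorem exists_isWeightedHomogeneous_dvd_mul_sub {ℓ z P Q : MvPolynomial σ K} {c : σ → K}
    (hX : ∀ i, ℓ ∣ X i - C (c i) * z) (hz : IsWeightedHomogeneous 1 z (1 : ℤ)) {m n : ℤ}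
    (hP : IsWeightedHomogeneous 1 P m) (hQ : IsWeightedHomogeneous 1 Q n) (hPℓ : ¬ ℓ ∣ P)
    (hmn : m ≤ n) : ∃ p, IsWeightedHomogeneous 1 p (n - m) ∧ ℓ ∣ p * P - Q := by
  have hP0 : P ≠ 0 := by rintro rfl; exact hPℓ (dvd_zero ℓ)
  lift n to ℕ using (hP.nonneg hP0).trans hmn
  lift m to ℕ using hP.nonneg hP0
  have hmn' : m ≤ n := by exact_mod_cast hmn
  have hPmod : ℓ ∣ P - C (eval c P) * z ^ m := hP.aeval_C_mul c z ▸ dvd_sub_aeval hX P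
  have hQmod : ℓ ∣ Q - C (eval c Q) * z ^ n := hQ.aeval_C_mul c z ▸ dvd_sub_aeval hX Q
  have hγ : eval c P ≠ 0 := fun h0 => hPℓ (by simpa [h0] using hPmod)
  refine ⟨C (eval c Q / eval c P) * z ^ (n - m), ?_, ?_⟩
  · simpa [Nat.cast_sub hmn'] using (hz.pow (n - m)).C_mul (eval c Q / eval c P)
  · have hlead : C (eval c Q / eval c P) * z ^ (n - m) * (C (eval c P) * z ^ m)
        = C (eval c Q) * z ^ n := by
      rw [mul_mul_mul_comm, ← map_mul, div_mul_cancel₀ _ hγ, ← pow_add, Nat.sub_add_cancel hmn']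
    convert dvd_sub (hPmod.mul_left (C (eval c Q / eval c P) * z ^ (n - m))) hQmod using 1
    linear_combination hlead

end Field

theorem prime_X_sub_X [CommRing R] [IsDomain R] [DecidableEq σ] {i j : σ} (hij : i ≠ j) :
    Prime (X i - X j : MvPolynomial σ R) := by
  let e : MvPolynomial σ R ≃ₐ[R] MvPolynomial σ R :=
    AlgEquiv.ofAlgHom (aeval (Function.update X i (X i - X j)))
      (aeval (Function.update X i (X i + X j)))
      (by ext k; by_cases hk : k = i <;> simp [hk, Function.update, hij.symm])
      (by ext k; by_cases hk : k = i <;> simp [hk, Function.update, hij.symm])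
  simpa [e] using (MulEquiv.prime_iff e).mpr (X_prime : Prime (X i : MvPolynomial σ R))

end MvPolynomial

section HilbertBurch

variable {σ K : Type*} [Field K]

/-- The minors say `σ₁ ⨯₃ σ₂ = u • (f, g, h)` for the syzygies `σᵢ = (Aᵢ, Bᵢ, Cᵢ)`, and `σᵢ` is
homogeneous of degree `dᵢ` when `f, g, h` have degrees `df, dg, dh`. Degrees are integers
because a zero entry may have negative degree. -/
structure HilbertBurchData (f g h : MvPolynomial σ K) (df dg dh : ℤ) where
  (A₁ B₁ C₁ A₂ B₂ C₂ u : MvPolynomial σ K)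
  (d₁ d₂ : ℤ)
  isUnit_u : IsUnit u
  syz₁ : A₁ * f + B₁ * g + C₁ * h = 0
  syz₂ : A₂ * f + B₂ * g + C₂ * h = 0
  minor₁ : B₁ * C₂ - C₁ * B₂ = u * f
  minor₂ : C₁ * A₂ - A₁ * C₂ = u * g
  minor₃ : A₁ * B₂ - B₁ * A₂ = u * h
  hom_A₁ : IsWeightedHomogeneous 1 A₁ (d₁ - df)
  hom_B₁ : IsWeightedHomogeneous 1 B₁ (d₁ - dg)
  hom_C₁ : IsWeightedHomogeneous 1 C₁ (d₁ - dh)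
  hom_A₂ : IsWeightedHomogeneous 1 A₂ (d₂ - df)
  hom_B₂ : IsWeightedHomogeneous 1 B₂ (d₂ - dg)
  hom_C₂ : IsWeightedHomogeneous 1 C₂ (d₂ - dh)

namespace HilbertBurchData

section
variable {f g h : MvPolynomial σ K} {df dg dh : ℤ}

noncomputable def rotate (S : HilbertBurchData f g h df dg dh) :
    HilbertBurchData g h f dg dh df where
  A₁ := S.B₁
  B₁ := S.C₁
  C₁ := S.A₁
  A₂ := S.B₂
  B₂ := S.C₂
  C₂ := S.A₂
  u := S.u
  d₁ := S.d₁
  d₂ := S.d₂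
  isUnit_u := S.isUnit_u
  syz₁ := by linear_combination S.syz₁
  syz₂ := by linear_combination S.syz₂
  minor₁ := S.minor₂
  minor₂ := S.minor₃
  minor₃ := S.minor₁
  hom_A₁ := S.hom_B₁
  hom_B₁ := S.hom_C₁
  hom_C₁ := S.hom_A₁
  hom_A₂ := S.hom_B₂
  hom_B₂ := S.hom_C₂
  hom_C₂ := S.hom_A₂

noncomputable def swap (S : HilbertBurchData f g h df dg dh) : HilbertBurchData f g h df dg dh where
  A₁ := S.A₂
  B₁ := S.B₂
  C₁ := S.C₂
  A₂ := S.A₁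
  B₂ := S.B₁
  C₂ := S.C₁
  u := -S.u
  d₁ := S.d₂
  d₂ := S.d₁
  isUnit_u := S.isUnit_u.neg
  syz₁ := S.syz₂
  syz₂ := S.syz₁
  minor₁ := by linear_combination -S.minor₁
  minor₂ := by linear_combination -S.minor₂
  minor₃ := by linear_combination -S.minor₃
  hom_A₁ := S.hom_A₂
  hom_B₁ := S.hom_B₂
  hom_C₁ := S.hom_C₂
  hom_A₂ := S.hom_A₁
  hom_B₂ := S.hom_B₁
  hom_C₂ := S.hom_C₁

theorem nonempty_mul_of_dvd (S : HilbertBurchData f g h df dg dh) {ℓ p : MvPolynomial σ K}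
    (hℓ₁ : IsWeightedHomogeneous 1 ℓ (1 : ℤ)) (hℓ0 : ℓ ≠ 0)
    (hp : IsWeightedHomogeneous 1 p (S.d₂ - S.d₁)) (hdvd : ℓ ∣ p * S.C₁ - S.C₂) :
    Nonempty (HilbertBurchData f g (ℓ * h) df dg (dh + 1)) := by
  obtain ⟨C', hC'⟩ := hdvd
  have hom_C' : IsWeightedHomogeneous 1 C' (S.d₂ - (dh + 1)) := by
    refine hℓ₁.of_mul_left hℓ0 ?_
    rw [← hC', show 1 + (S.d₂ - (dh + 1)) = S.d₂ - dh by ring]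
    exact hp.mul_sub S.hom_C₁ S.hom_C₂ (by ring)
  exact ⟨{
    A₁ := ℓ * S.A₁
    B₁ := ℓ * S.B₁
    C₁ := S.C₁
    A₂ := p * S.A₁ - S.A₂
    B₂ := p * S.B₁ - S.B₂
    C₂ := C'
    u := -S.u
    d₁ := S.d₁ + 1
    d₂ := S.d₂
    isUnit_u := S.isUnit_u.neg
    syz₁ := by linear_combination ℓ * S.syz₁
    syz₂ := by linear_combination p * S.syz₁ - S.syz₂ + h * hC'.symm
    minor₁ := by linear_combination S.B₁ * hC'.symm - S.minor₁
    minor₂ := by linear_combination -S.A₁ * hC'.symm - S.minor₂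
    minor₃ := by linear_combination (-ℓ) * S.minor₃
    hom_A₁ := by convert hℓ₁.mul S.hom_A₁ using 1; ring
    hom_B₁ := by convert hℓ₁.mul S.hom_B₁ using 1; ring
    hom_C₁ := by convert S.hom_C₁ using 1; ring
    hom_A₂ := hp.mul_sub S.hom_A₁ S.hom_A₂ (by ring)
    hom_B₂ := hp.mul_sub S.hom_B₁ S.hom_B₂ (by ring)
    hom_C₂ := hom_C' }⟩

theorem nonempty_mul_of_not_dvd (S : HilbertBurchData f g h df dg dh) {ℓ z : MvPolynomial σ K}
    {c : σ → K} (hℓ₁ : IsWeightedHomogeneous 1 ℓ (1 : ℤ)) (hℓ0 : ℓ ≠ 0)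
    (hz : IsWeightedHomogeneous 1 z (1 : ℤ)) (hX : ∀ i, ℓ ∣ X i - C (c i) * z)
    (hC₁ : ¬ ℓ ∣ S.C₁) (hC₂ : ℓ ∣ S.C₂ ∨ S.d₁ ≤ S.d₂) :
    Nonempty (HilbertBurchData f g (ℓ * h) df dg (dh + 1)) := by
  by_cases h₂ : ℓ ∣ S.C₂
  · exact S.nonempty_mul_of_dvd hℓ₁ hℓ0 (isWeightedHomogeneous_zero _ _ _) (by simpa using h₂)
  · obtain ⟨p, hp, hdvd⟩ := exists_isWeightedHomogeneous_dvd_mul_sub hX hz S.hom_C₁ S.hom_C₂ hC₁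
      (sub_le_sub_right (hC₂.resolve_left h₂) _)
    rw [sub_sub_sub_cancel_right] at hp
    exact S.nonempty_mul_of_dvd hℓ₁ hℓ0 hp hdvd

theorem nonempty_mul (S : HilbertBurchData f g h df dg dh) {ℓ z : MvPolynomial σ K}
    {c : σ → K} (hℓ : Prime ℓ) (hℓ₁ : IsWeightedHomogeneous 1 ℓ (1 : ℤ))
    (hz : IsWeightedHomogeneous 1 z (1 : ℤ)) (hX : ∀ i, ℓ ∣ X i - C (c i) * z)
    (hf : ¬ ℓ ∣ f) : Nonempty (HilbertBurchData f g (ℓ * h) df dg (dh + 1)) := by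
  by_cases h₁ : ℓ ∣ S.C₁
  · -- `ℓ` cannot divide `C₂` as well, because `B₁ C₂ - C₁ B₂ = u f`.
    refine S.swap.nonempty_mul_of_not_dvd hℓ₁ hℓ.ne_zero hz hX (fun h₂ => hf ?_) (Or.inl h₁)
    rw [← S.isUnit_u.dvd_mul_left, ← S.minor₁]
    exact dvd_sub (h₂.mul_left _) (h₁.mul_right _)
  · by_cases h₂ : ℓ ∣ S.C₂ ∨ S.d₁ ≤ S.d₂
    · exact S.nonempty_mul_of_not_dvd hℓ₁ hℓ.ne_zero hz hX h₁ h₂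
    · push Not at h₂
      exact S.swap.nonempty_mul_of_not_dvd hℓ₁ hℓ.ne_zero hz hX h₂.1 (Or.inr h₂.2.le)

theorem exists_cross_eq_smul {T : Type*} [CommRing T] (S : HilbertBurchData f g h df dg dh)
    (φ : MvPolynomial σ K →+* T) :
    ∃ σ₁ σ₂ : Fin 3 → T, ∃ u : T, IsUnit u ∧ σ₁ ⬝ᵥ ![φ f, φ g, φ h] = 0 ∧
      σ₂ ⬝ᵥ ![φ f, φ g, φ h] = 0 ∧ σ₁ ⨯₃ σ₂ = u • ![φ f, φ g, φ h] := by
  refine ⟨![φ S.A₁, φ S.B₁, φ S.C₁], ![φ S.A₂, φ S.B₂, φ S.C₂], φ S.u, S.isUnit_u.map φ,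
    ?_, ?_, ?_⟩
  · simpa only [vec3_dotProduct', map_add, map_mul, map_zero] using congrArg φ S.syz₁
  · simpa only [vec3_dotProduct', map_add, map_mul, map_zero] using congrArg φ S.syz₂
  · rw [cross_apply]
    ext i
    fin_cases i
    · simpa using congrArg φ S.minor₁
    · simpa using congrArg φ S.minor₂
    · simpa using congrArg φ S.minor₃

end

noncomputable def one : HilbertBurchData (1 : MvPolynomial σ K) 1 1 0 0 0 where
  A₁ := 1
  B₁ := -1
  C₁ := 0
  A₂ := 1
  B₂ := 0
  C₂ := -1
  u := 1
  d₁ := 0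
  d₂ := 0
  isUnit_u := isUnit_one
  syz₁ := by ring
  syz₂ := by ring
  minor₁ := by ring
  minor₂ := by ring
  minor₃ := by ring
  hom_A₁ := isWeightedHomogeneous_one _ _
  hom_B₁ := (isWeightedHomogeneous_one _ _).neg
  hom_C₁ := isWeightedHomogeneous_zero _ _ _
  hom_A₂ := isWeightedHomogeneous_one _ _
  hom_B₂ := isWeightedHomogeneous_zero _ _ _
  hom_C₂ := (isWeightedHomogeneous_one _ _).neg

section TwoVariables

variable {f g h : MvPolynomial (Fin 2) K} {df dg dh : ℤ}

theorem nonempty_X_zero_mul (S : HilbertBurchData f g h df dg dh) (hg : ¬ X 0 ∣ g) :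
    Nonempty (HilbertBurchData (X 0 * f) g h (df + 1) dg dh) := by
  obtain ⟨T⟩ := S.rotate.nonempty_mul (z := X 1) (c := ![0, 1]) X_prime
    (isWeightedHomogeneous_X K 1 0) (isWeightedHomogeneous_X K 1 1)
    (Fin.forall_fin_two.mpr ⟨by simp, by simp⟩) hg
  exact ⟨T.rotate.rotate⟩

theorem nonempty_X_one_mul (S : HilbertBurchData f g h df dg dh) (hh : ¬ X 1 ∣ h) :
    Nonempty (HilbertBurchData f (X 1 * g) h df (dg + 1) dh) := by
  obtain ⟨T⟩ := S.rotate.rotate.nonempty_mul (z := X 0) (c := ![1, 0]) X_prime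
    (isWeightedHomogeneous_X K 1 1) (isWeightedHomogeneous_X K 1 0)
    (Fin.forall_fin_two.mpr ⟨by simp, by simp⟩) hh
  exact ⟨T.rotate⟩

theorem nonempty_X_one_sub_X_zero_mul (S : HilbertBurchData f g h df dg dh)
    (hf : ¬ X 1 - X 0 ∣ f) :
    Nonempty (HilbertBurchData f g ((X 1 - X 0) * h) df dg (dh + 1)) :=
  S.nonempty_mul (z := X 0) (c := ![1, 1]) (prime_X_sub_X (by decide))
    ((isWeightedHomogeneous_X K 1 1).sub (isWeightedHomogeneous_X K 1 0))
    (isWeightedHomogeneous_X K 1 0) (Fin.forall_fin_two.mpr ⟨by simp, by simp⟩) hf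

theorem nonempty_pow (a b c : ℕ) :
    Nonempty (HilbertBurchData (X 0 ^ a : MvPolynomial (Fin 2) K) (X 1 ^ b) ((X 1 - X 0) ^ c)
      a b c) := by
  induction c with
  | zero =>
    induction b with
    | zero =>
      induction a with
      | zero => simpa using ⟨one⟩
      | succ a ih =>
        obtain ⟨S⟩ := ih
        rw [pow_succ', Nat.cast_succ]
        exact S.nonempty_X_zero_mul (not_dvd_of_eval_eq_zero (x := ![0, 1]) (by simp) (by simp))
    | succ b ih =>
      obtain ⟨S⟩ := ih
      rw [pow_succ', Nat.cast_succ]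
      exact S.nonempty_X_one_mul (not_dvd_of_eval_eq_zero (x := ![1, 0]) (by simp) (by simp))
  | succ c ih =>
    obtain ⟨S⟩ := ih
    rw [pow_succ', Nat.cast_succ]
    exact S.nonempty_X_one_sub_X_zero_mul
      (not_dvd_of_eval_eq_zero (x := ![1, 1]) (by simp) (by simp))

end TwoVariables

end HilbertBurchData

end HilbertBurch

section Syzygies

variable {R : Type*} [CommRing R] {F σ₁ σ₂ : Fin 3 → R} {u : R}

theorem linearIndependent_of_cross_eq_smul [IsDomain R] (hF : F ≠ 0) (hu : u ≠ 0)
    (h : σ₁ ⨯₃ σ₂ = u • F) : LinearIndependent R ![σ₁, σ₂] := by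
  rw [LinearIndependent.pair_iff]
  intro s t hst
  have hs : (s * u) • F = 0 := by
    simpa [cross_self, h, smul_smul] using congrArg (· ⨯₃ σ₂) hst
  have ht : (t * u) • F = 0 := by
    simpa [cross_self, h, smul_smul] using congrArg (σ₁ ⨯₃ ·) hst
  simp only [smul_eq_zero, mul_eq_zero, hu, hF, or_false] at hs ht
  exact ⟨hs, ht⟩

theorem exists_cross_apply_two_eq_mul [DecompositionMonoid R] (hF : IsRelPrime (F 2) (F 0))
    {x y : Fin 3 → R} (hx : x ⬝ᵥ F = 0) (hy : y ⬝ᵥ F = 0) : ∃ p, (x ⨯₃ y) 2 = F 2 * p := by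
  -- `x ⨯₃ y` is parallel to `F`, as `(x ⨯₃ y) ⨯₃ F = (x ⬝ᵥ F) • y - (y ⬝ᵥ F) • x = 0`.
  have h := congrFun (cross_cross_eq_smul_sub_smul x y F) 1
  rw [hx, hy, zero_smul, zero_smul, sub_zero, cross_apply] at h
  refine hF.dvd_of_dvd_mul_left ⟨(x ⨯₃ y) 0, ?_⟩
  simpa [sub_eq_zero, mul_comm] using h

theorem mem_span_of_cross_eq_smul [IsDomain R] [DecompositionMonoid R] (hu : IsUnit u)
    (hF : F 2 ≠ 0) (hFrel : IsRelPrime (F 2) (F 0))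
    (h₁ : σ₁ ⬝ᵥ F = 0) (h₂ : σ₂ ⬝ᵥ F = 0) (h : σ₁ ⨯₃ σ₂ = u • F) {σ : Fin 3 → R}
    (hσ : σ ⬝ᵥ F = 0) : σ ∈ Submodule.span R {σ₁, σ₂} := by
  obtain ⟨p, hp⟩ := exists_cross_apply_two_eq_mul hFrel hσ h₂
  obtain ⟨q, hq⟩ := exists_cross_apply_two_eq_mul hFrel h₁ hσ
  have hu₂ := congrFun h 2
  simp only [cross_apply, Pi.smul_apply, smul_eq_mul, cons_val] at hp hq hu₂
  rw [vec3_dotProduct] at h₁ h₂ hσ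
  -- Cramer's rule in the first two coordinates, then the syzygy relation for the third.
  have e₀ : u * σ 0 = p * σ₁ 0 + q * σ₂ 0 := mul_left_cancel₀ hF (by
    linear_combination -σ 0 * hu₂ + σ₁ 0 * hp + σ₂ 0 * hq)
  have e₁ : u * σ 1 = p * σ₁ 1 + q * σ₂ 1 := mul_left_cancel₀ hF (by
    linear_combination -σ 1 * hu₂ + σ₁ 1 * hp + σ₂ 1 * hq)
  have e₂ : u * σ 2 = p * σ₁ 2 + q * σ₂ 2 := mul_left_cancel₀ hF (by
    linear_combination u * hσ - p * h₁ - q * h₂ - F 0 * e₀ - F 1 * e₁)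
  have e : u • σ = p • σ₁ + q • σ₂ := by
    ext i
    fin_cases i <;> simp [e₀, e₁, e₂]
  obtain ⟨v, rfl⟩ := hu
  refine Submodule.mem_span_pair.mpr ⟨↑v⁻¹ * p, ↑v⁻¹ * q, ?_⟩
  rw [mul_smul, mul_smul, ← smul_add, ← e, smul_smul, Units.inv_mul, one_smul]

theorem free_of_cross_eq_smul [IsDomain R] [DecompositionMonoid R] (N : Submodule R (Fin 3 → R))
    (hN : ∀ σ, σ ∈ N ↔ σ ⬝ᵥ F = 0)
    (hu : IsUnit u) (hF : F 2 ≠ 0) (hFrel : IsRelPrime (F 2) (F 0))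
    (h₁ : σ₁ ⬝ᵥ F = 0) (h₂ : σ₂ ⬝ᵥ F = 0) (h : σ₁ ⨯₃ σ₂ = u • F) : Module.Free R N := by
  have hli := linearIndependent_of_cross_eq_smul (fun h0 => hF (congrFun h0 2)) hu.ne_zero h
  have hspan : Submodule.span R (Set.range ![σ₁, σ₂]) = N := by
    rw [range_cons_cons_empty]
    refine le_antisymm ?_ fun σ hσ => ?_
    · rw [Submodule.span_le, Set.insert_subset_iff, Set.singleton_subset_iff]
      exact ⟨(hN σ₁).mpr h₁, (hN σ₂).mpr h₂⟩
    · exact mem_span_of_cross_eq_smul hu hF hFrel h₁ h₂ h ((hN σ).mp hσ)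
  have := Module.Free.of_basis (Module.Basis.span hli)
  exact Module.Free.of_equiv (LinearEquiv.ofEq _ _ hspan)

end Syzygies

section Triangle

variable {R : Type*} [CommRing R]

-- The summand `R` is spanned by `∂₀ + ∂₁ + ∂₂ = (1, 1, 1)`, which kills every `xᵢ - xⱼ`.
def prodToMultiderivation (a b : R) (N : Submodule R (Fin 3 → R)) :
    R × N →ₗ[R] Fin 3 → R where
  toFun x := ![x.1, x.1 - (x.2 : Fin 3 → R) 0 * a, x.1 + (x.2 : Fin 3 → R) 1 * b]
  map_add' x y := by
    ext i
    fin_cases i <;> simp <;> ring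
  map_smul' r x := by
    ext i
    fin_cases i <;> simp <;> ring

theorem prodToMultiderivation_apply (a b : R) (N : Submodule R (Fin 3 → R)) (x : R × N) :
    prodToMultiderivation a b N x =
      ![x.1, x.1 - (x.2 : Fin 3 → R) 0 * a, x.1 + (x.2 : Fin 3 → R) 1 * b] :=
  rfl

variable {a b c : R} {N : Submodule R (Fin 3 → R)}

theorem prodToMultiderivation_injective [IsDomain R]
    (hN : ∀ g : Fin 3 → R, g ∈ N ↔ g 0 * a + g 1 * b + g 2 * c = 0)
    (ha : a ≠ 0) (hb : b ≠ 0) (hc : c ≠ 0) :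
    Function.Injective (prodToMultiderivation a b N) := by
  rw [injective_iff_map_eq_zero]
  rintro ⟨s, g, hg⟩ h0
  obtain rfl : s = 0 := congrFun h0 0
  have hg₀ : g 0 = 0 := by simpa [prodToMultiderivation_apply, ha] using congrFun h0 1
  have hg₁ : g 1 = 0 := by simpa [prodToMultiderivation_apply, hb] using congrFun h0 2
  have hg₂ : g 2 = 0 := by simpa [hg₀, hg₁, hc] using (hN g).mp hg
  exact Prod.ext rfl (Subtype.ext (funext fun i => by fin_cases i <;> assumption))

theorem range_prodToMultiderivation
    (hN : ∀ g : Fin 3 → R, g ∈ N ↔ g 0 * a + g 1 * b + g 2 * c = 0) (D : Submodule R (Fin 3 → R))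
    (hD : ∀ θ : Fin 3 → R, θ ∈ D ↔ (θ 0 - θ 1 ∈ Ideal.span {a} ∧ θ 0 - θ 2 ∈ Ideal.span {b} ∧
      θ 1 - θ 2 ∈ Ideal.span {c})) :
    LinearMap.range (prodToMultiderivation a b N) = D := by
  apply le_antisymm
  · rintro _ ⟨⟨s, g, hg⟩, rfl⟩
    have hsyz := (hN g).mp hg
    simp only [hD, Ideal.mem_span_singleton]
    refine ⟨⟨g 0, ?_⟩, ⟨-g 1, ?_⟩, ⟨g 2, ?_⟩⟩ <;>
      simp only [prodToMultiderivation_apply, cons_val_zero, cons_val_one, cons_val]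
    · ring
    · ring
    · linear_combination -hsyz
  · intro θ hθ
    obtain ⟨⟨r₀, h₀⟩, ⟨r₁, h₁⟩, ⟨r₂, h₂⟩⟩ := by
      simpa only [Ideal.mem_span_singleton] using (hD θ).mp hθ
    have hg : ![r₀, -r₁, r₂] ∈ N := (hN _).mpr (by
      show r₀ * a + -r₁ * b + r₂ * c = 0
      linear_combination h₁ - h₀ - h₂)
    refine ⟨(θ 0, ⟨_, hg⟩), ?_⟩
    ext i
    fin_cases i
    · rfl
    · show θ 0 - r₀ * a = θ 1
      linear_combination h₀
    · show θ 0 + -r₁ * b = θ 2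
      linear_combination h₁

theorem nonempty_linearEquiv_prod_syzygies [IsDomain R] (ha : a ≠ 0) (hb : b ≠ 0) (hc : c ≠ 0)
    (D N : Submodule R (Fin 3 → R))
    (hD : ∀ θ : Fin 3 → R, θ ∈ D ↔ (θ 0 - θ 1 ∈ Ideal.span {a} ∧ θ 0 - θ 2 ∈ Ideal.span {b} ∧
      θ 1 - θ 2 ∈ Ideal.span {c}))
    (hN : ∀ g : Fin 3 → R, g ∈ N ↔ g 0 * a + g 1 * b + g 2 * c = 0) :
    Nonempty (D ≃ₗ[R] R × N) :=
  ⟨((LinearEquiv.ofInjective _ (prodToMultiderivation_injective hN ha hb hc)).trans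
    (LinearEquiv.ofEq _ _ (range_prodToMultiderivation hN D hD))).symm⟩

theorem free_syzygies_pow {K : Type*} [Field K] (a b c : ℕ)
    (N : Submodule (MvPolynomial (Fin 3) K) (Fin 3 → MvPolynomial (Fin 3) K))
    (hN : ∀ g : Fin 3 → MvPolynomial (Fin 3) K, g ∈ N ↔
      g 0 * (X 0 - X 1) ^ a + g 1 * (X 0 - X 2) ^ b + g 2 * (X 1 - X 2) ^ c = 0) :
    Module.Free (MvPolynomial (Fin 3) K) N := by
  obtain ⟨S⟩ := HilbertBurchData.nonempty_pow (K := K) a b c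
  let φ : MvPolynomial (Fin 2) K →+* MvPolynomial (Fin 3) K :=
    (aeval ![X 0 - X 1, X 0 - X 2]).toRingHom
  obtain ⟨σ₁, σ₂, u, hu, h₁, h₂, h⟩ := S.exists_cross_eq_smul φ
  have hF : ![φ (X 0 ^ a), φ (X 1 ^ b), φ ((X 1 - X 0) ^ c)] =
      ![(X 0 - X 1) ^ a, (X 0 - X 2) ^ b, (X 1 - X 2) ^ c] := by
    simp [φ]
  rw [hF] at h₁ h₂ h
  have hw : Prime (X 1 - X 2 : MvPolynomial (Fin 3) K) := prime_X_sub_X (by decide)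
  have hrel : IsRelPrime ((X 1 - X 2) ^ c) ((X 0 - X 1 : MvPolynomial (Fin 3) K) ^ a) :=
    (hw.irreducible.isRelPrime_iff_not_dvd.mpr
      (not_dvd_of_eval_eq_zero (x := ![1, 0, 0]) (by simp) (by simp))).pow
  exact free_of_cross_eq_smul N (fun g => by rw [hN, vec3_dotProduct]; rfl) hu
    (pow_ne_zero _ hw.ne_zero) hrel h₁ h₂ h

end Triangle

theorem stmt15_general (K : Type*) [Field K] (m01 m02 m12 : ℕ)
    (D Syz : Submodule (MvPolynomial (Fin 3) K) (Fin 3 → MvPolynomial (Fin 3) K))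
    (hD : ∀ θ : Fin 3 → MvPolynomial (Fin 3) K, θ ∈ D ↔
      (θ 0 - θ 1 ∈ Ideal.span {(X 0 - X 1 : MvPolynomial (Fin 3) K) ^ m01} ∧
       θ 0 - θ 2 ∈ Ideal.span {(X 0 - X 2 : MvPolynomial (Fin 3) K) ^ m02} ∧
       θ 1 - θ 2 ∈ Ideal.span {(X 1 - X 2 : MvPolynomial (Fin 3) K) ^ m12}))
    (hSyz : ∀ g : Fin 3 → MvPolynomial (Fin 3) K, g ∈ Syz ↔
      g 0 * (X 0 - X 1) ^ m01 + g 1 * (X 0 - X 2) ^ m02 +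
        g 2 * (X 1 - X 2) ^ m12 = 0) :
    Nonempty (D ≃ₗ[MvPolynomial (Fin 3) K] (MvPolynomial (Fin 3) K × Syz)) ∧
      Module.Free (MvPolynomial (Fin 3) K) D := by
  have hX {i j : Fin 3} (hij : i ≠ j) : (X i - X j : MvPolynomial (Fin 3) K) ≠ 0 :=
    (prime_X_sub_X hij).ne_zero
  obtain ⟨e⟩ := nonempty_linearEquiv_prod_syzygies (pow_ne_zero m01 (hX (by decide)))
    (pow_ne_zero m02 (hX (by decide))) (pow_ne_zero m12 (hX (by decide))) D Syz hD hSyz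
  have := free_syzygies_pow m01 m02 m12 Syz hSyz
  exact ⟨⟨e⟩, Module.Free.of_equiv e.symm⟩

/-- For the `A_2` (triangle) multiarrangement, the module of multiderivations
(identified with `{θ : Fin 3 → S | θ i - θ j ∈ ⟨(x_i-x_j)^{m_{ij}}⟩}` via
`θ = ∑ θ_i ∂_i`) is isomorphic to `S ⊕ syz(J)`; in particular it is free. -/
theorem stmt15 (K : Type*) [Field K] [CharZero K] (m01 m02 m12 : ℕ)
    (h01 : 0 < m01) (h02 : 0 < m02) (h12 : 0 < m12)
    (D Syz : Submodule (MvPolynomial (Fin 3) K) (Fin 3 → MvPolynomial (Fin 3) K))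
    (hD : ∀ θ : Fin 3 → MvPolynomial (Fin 3) K, θ ∈ D ↔
      (θ 0 - θ 1 ∈ Ideal.span {(X 0 - X 1 : MvPolynomial (Fin 3) K) ^ m01} ∧
       θ 0 - θ 2 ∈ Ideal.span {(X 0 - X 2 : MvPolynomial (Fin 3) K) ^ m02} ∧
       θ 1 - θ 2 ∈ Ideal.span {(X 1 - X 2 : MvPolynomial (Fin 3) K) ^ m12}))
    (hSyz : ∀ g : Fin 3 → MvPolynomial (Fin 3) K, g ∈ Syz ↔
      g 0 * (X 0 - X 1) ^ m01 + g 1 * (X 0 - X 2) ^ m02 +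
        g 2 * (X 1 - X 2) ^ m12 = 0) :
    Nonempty (D ≃ₗ[MvPolynomial (Fin 3) K] (MvPolynomial (Fin 3) K × Syz)) ∧
      Module.Free (MvPolynomial (Fin 3) K) D :=
  stmt15_general K m01 m02 m12 D Syz hD hSyz
end

section
/- Let $S=\mathbb{K}[x,y,z]$ and let $a,b,c,d,e$ be positive integers. Consider the map $\delta: J(01)\oplus J(02)\oplus J(03)\oplus J(12)\oplus J(13)\to J(013)\oplus J(012)$ given by $\delta(f_1,f_2,f_3,f_4,f_5)=(f_1+f_3-f_5,\; f_1-f_2-f_4)$, where $J(01)=\langle x^a\rangle$, $J(02)=\langle y^b\rangle$, $J(03)=\langle z^c\rangle$, $J(12)=\langle (y-x)^d\rangle$, $J(13)=\langle (z-x)^e\rangle$, $J(013)=\langle x^a,z^c,(z-x)^e\rangle$, $J(012)=\langle x^a,y^b,(y-x)^d\rangle$. Then $\delta$ is surjective if and only if $c+e\le a+1$ or $b+d\le a+1$. -/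
open MvPolynomial

-- Helper 1: easy-direction membership: `x^a ∈ (s^m, (s-x)^n)` when `m + n ≤ a + 1`.
lemma mem_span_pow_pow {R : Type*} [CommRing R] (x s : R) {m n a : ℕ}
    (hn : 1 ≤ n) (h : m + n ≤ a + 1) :
    x ^ a ∈ Ideal.span {s ^ m, (s - x) ^ n} := by
  have hx : x ^ a = (s + (x - s)) ^ a := by ring
  rw [hx, add_pow]
  refine Ideal.sum_mem _ fun i hi => ?_
  simp only [Finset.mem_range] at hi
  rcases le_or_gt m i with him | him
  · have hdvd : s ^ m ∣ s ^ i * (x - s) ^ (a - i) * (a.choose i : R) :=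
      ((pow_dvd_pow s him).mul_right _).mul_right _
    obtain ⟨r, hr⟩ := hdvd
    rw [hr]
    exact Ideal.mul_mem_right _ _ (Ideal.subset_span (Set.mem_insert _ _))
  · have h1 : (s - x) ^ n ∣ (x - s) ^ (a - i) := by
      calc (s - x) ^ n ∣ (s - x) ^ (a - i) := pow_dvd_pow _ (by omega)
        _ ∣ (x - s) ^ (a - i) := pow_dvd_pow_of_dvd ⟨-1, by ring⟩ _
    have hdvd : (s - x) ^ n ∣ s ^ i * (x - s) ^ (a - i) * (a.choose i : R) :=
      (h1.mul_left _).mul_right _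
    obtain ⟨r, hr⟩ := hdvd
    rw [hr]
    exact Ideal.mul_mem_right _ _ (Ideal.subset_span (Set.mem_insert_of_mem _ rfl))

-- Helper 2: homogeneous component of a product with a homogeneous polynomial.
lemma hc_mul_homog {σ R : Type*} [CommRing R] {q : MvPolynomial σ R} {k : ℕ}
    (hq : q.IsHomogeneous k) (p : MvPolynomial σ R) (n : ℕ) :
    homogeneousComponent n (p * q) =
      if k ≤ n then homogeneousComponent (n - k) p * q else 0 := by
  have hpq : p * q = ∑ i ∈ Finset.range (p.totalDegree + 1),
      homogeneousComponent i p * q := by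
    rw [← Finset.sum_mul, sum_homogeneousComponent]
  rw [hpq, map_sum]
  have key : ∀ i, homogeneousComponent n (homogeneousComponent i p * q)
      = if n = i + k then homogeneousComponent i p * q else 0 := fun i =>
    homogeneousComponent_of_mem ((homogeneousComponent_isHomogeneous i p).mul hq)
  simp_rw [key]
  by_cases hk : k ≤ n
  · rw [if_pos hk]
    rw [Finset.sum_congr rfl (fun i _ => show
        (if n = i + k then homogeneousComponent i p * q else 0)
          = if i = n - k then homogeneousComponent (n - k) p * q else 0 by
      by_cases hi : i = n - k
      · subst hi; rw [if_pos (by omega), if_pos rfl]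
      · rw [if_neg (by omega), if_neg hi])]
    rw [Finset.sum_ite_eq' (Finset.range (p.totalDegree + 1)) (n - k)]
    split_ifs with hmem
    · rfl
    · simp only [Finset.mem_range, not_lt] at hmem
      rw [homogeneousComponent_eq_zero _ p (by omega), zero_mul]
  · rw [if_neg hk]
    exact Finset.sum_eq_zero fun i _ => if_neg (by omega)

-- Helper: coefficient of `x^t y^(a-t)` in `(x+y)^a`.
lemma coeff_add_pow_aux {K : Type*} [CommSemiring K] (i j : Fin 3) (hij : i ≠ j)
    (a t : ℕ) (ht : t ≤ a) :
    coeff (Finsupp.single i t + Finsupp.single j (a - t))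
      ((X i + X j : MvPolynomial (Fin 3) K) ^ a) = (a.choose t : K) := by
  rw [add_pow, coeff_sum]
  have hterm : ∀ x, coeff (Finsupp.single i t + Finsupp.single j (a - t))
      ((X i : MvPolynomial (Fin 3) K) ^ x * X j ^ (a - x) *
        (a.choose x : MvPolynomial (Fin 3) K))
      = if x = t then (a.choose x : K) else 0 := by
    intro x
    rw [X_pow_eq_monomial, X_pow_eq_monomial, monomial_mul, one_mul,
      (map_natCast (C : K →+* MvPolynomial (Fin 3) K) (a.choose x)).symm,
      mul_comm, C_mul_monomial, mul_one, coeff_monomial]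
    congr 1
    · rw [eq_iff_iff]
      constructor
      · intro hxy
        have := congrArg (fun f => f i) hxy
        simpa [Finsupp.single_apply, hij, (Ne.symm hij)] using this
      · rintro rfl; rfl
  rw [Finset.sum_congr rfl (fun x _ => hterm x)]
  rw [Finset.sum_ite_eq' (Finset.range (a + 1)) t]
  rw [if_pos (Finset.mem_range.mpr (by omega))]

-- Helper 3: non-membership `x^a ∉ (y^c, (y-x)^e)` when `a + 2 ≤ c + e`.
lemma x_pow_notmem {K : Type*} [Field K] [CharZero K] {a c e : ℕ}
    (hc : 1 ≤ c) (he : 1 ≤ e) (h : a + 2 ≤ c + e) (i j : Fin 3) (hij : i ≠ j) :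
    (X i : MvPolynomial (Fin 3) K) ^ a ∉ Ideal.span {X j ^ c, (X j - X i) ^ e} := by
  intro hmem
  rw [Ideal.mem_span_pair] at hmem
  obtain ⟨A, B, hAB⟩ := hmem
  set φ : MvPolynomial (Fin 3) K →ₐ[K] MvPolynomial (Fin 3) K :=
    aeval (fun k => if k = i then X i + X j else X k) with hφ
  have hXi : φ (X i) = X i + X j := by simp [hφ]
  have hXj : φ (X j) = X j := by simp [hφ, Ne.symm hij]
  have h2 := congrArg φ hAB
  simp only [map_add, map_mul, map_pow, map_sub, hXi, hXj] at h2
  have hneg : (X j - (X i + X j) : MvPolynomial (Fin 3) K) = -X i := by ring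
  rw [hneg] at h2
  set k := a + 1 - c with hk
  have hka : k ≤ a := by omega
  have hkc : a - k < c := by omega
  have hke : k < e := by omega
  have h3 := congrArg (coeff (Finsupp.single i k + Finsupp.single j (a - k))) h2
  rw [coeff_add_pow_aux i j hij a k hka] at h3
  rw [coeff_add] at h3
  have hz1 : coeff (Finsupp.single i k + Finsupp.single j (a - k)) (φ A * X j ^ c) = 0 := by
    rw [X_pow_eq_monomial, coeff_mul_monomial', if_neg]
    rw [Finsupp.single_le_iff]
    simp [Finsupp.single_apply, Ne.symm hij, hij]
    omega
  have hz2 : coeff (Finsupp.single i k + Finsupp.single j (a - k)) (φ B * (-X i) ^ e) = 0 := by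
    rw [show φ B * (-X i) ^ e = (φ B * (-1) ^ e) * X i ^ e from by rw [neg_pow]; ring,
      X_pow_eq_monomial, coeff_mul_monomial', if_neg]
    rw [Finsupp.single_le_iff]
    simp [Finsupp.single_apply, hij, Ne.symm hij]
    omega
  rw [hz1, hz2, zero_add] at h3
  have : (a.choose k : K) ≠ 0 := Nat.cast_ne_zero.mpr (Nat.choose_pos hka).ne'
  exact this h3.symm

/-- Surjectivity of the map `δ(f₁,…,f₅) = (f₁+f₃-f₅, f₁-f₂-f₄)` from
`J(01)⊕J(02)⊕J(03)⊕J(12)⊕J(13)` to `J(013)⊕J(012)` holds iff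
`c+e ≤ a+1` or `b+d ≤ a+1` (freeness of the deleted `A₃` multiarrangement). -/
theorem stmt16 (K : Type*) [Field K] [CharZero K] (a b c d e : ℕ)
    (ha : 0 < a) (hb : 0 < b) (hc : 0 < c) (hd : 0 < d) (he : 0 < e) :
    (∀ u v : MvPolynomial (Fin 3) K,
      u ∈ Ideal.span {(X 0 : MvPolynomial (Fin 3) K) ^ a, X 2 ^ c, (X 2 - X 0) ^ e} →
      v ∈ Ideal.span {(X 0 : MvPolynomial (Fin 3) K) ^ a, X 1 ^ b, (X 1 - X 0) ^ d} →
      ∃ f1 f2 f3 f4 f5 : MvPolynomial (Fin 3) K,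
        f1 ∈ Ideal.span {(X 0 : MvPolynomial (Fin 3) K) ^ a} ∧
        f2 ∈ Ideal.span {(X 1 : MvPolynomial (Fin 3) K) ^ b} ∧
        f3 ∈ Ideal.span {(X 2 : MvPolynomial (Fin 3) K) ^ c} ∧
        f4 ∈ Ideal.span {(X 1 - X 0 : MvPolynomial (Fin 3) K) ^ d} ∧
        f5 ∈ Ideal.span {(X 2 - X 0 : MvPolynomial (Fin 3) K) ^ e} ∧
        f1 + f3 - f5 = u ∧ f1 - f2 - f4 = v) ↔
      (c + e ≤ a + 1 ∨ b + d ≤ a + 1) := by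
  constructor
  · -- hard direction
    intro hs
    by_contra hcon
    push_neg at hcon
    obtain ⟨h1, h2⟩ := hcon
    obtain ⟨f1, f2, f3, f4, f5, m1, m2, m3, m4, m5, e1, e2⟩ :=
      hs ((X 0 : MvPolynomial (Fin 3) K) ^ a) 0
        (Ideal.subset_span (Set.mem_insert _ _)) (Ideal.zero_mem _)
    obtain ⟨g, hg⟩ := Ideal.mem_span_singleton'.mp m1
    obtain ⟨p2, hp2⟩ := Ideal.mem_span_singleton'.mp m2
    obtain ⟨A, hA⟩ := Ideal.mem_span_singleton'.mp m3
    obtain ⟨p4, hp4⟩ := Ideal.mem_span_singleton'.mp m4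
    obtain ⟨B, hB⟩ := Ideal.mem_span_singleton'.mp m5
    set lam := coeff 0 g with hlamdef
    have hhz : ((X 2 : MvPolynomial (Fin 3) K) ^ c).IsHomogeneous c :=
      isHomogeneous_X_pow _ _
    have hhzx : ((X 2 - X 0 : MvPolynomial (Fin 3) K) ^ e).IsHomogeneous e := by
      simpa using (((isHomogeneous_X K (2 : Fin 3)).sub (isHomogeneous_X K 0)).pow e)
    have hhy : ((X 1 : MvPolynomial (Fin 3) K) ^ b).IsHomogeneous b :=
      isHomogeneous_X_pow _ _
    have hhyx : ((X 1 - X 0 : MvPolynomial (Fin 3) K) ^ d).IsHomogeneous d := by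
      simpa using (((isHomogeneous_X K (1 : Fin 3)).sub (isHomogeneous_X K 0)).pow d)
    have hf1 : homogeneousComponent a f1 = C lam * X 0 ^ a := by
      rw [← hg, hc_mul_homog (isHomogeneous_X_pow (0 : Fin 3) a), if_pos le_rfl,
        Nat.sub_self, homogeneousComponent_zero]
    have hxaa : homogeneousComponent a ((X 0 : MvPolynomial (Fin 3) K) ^ a) = X 0 ^ a := by
      rw [homogeneousComponent_of_mem (isHomogeneous_X_pow (0 : Fin 3) a), if_pos rfl]
    have t3 : homogeneousComponent a f3 ∈
        Ideal.span {(X 2 : MvPolynomial (Fin 3) K) ^ c, (X 2 - X 0) ^ e} := by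
      rw [← hA, hc_mul_homog hhz]
      split_ifs
      · exact Ideal.mul_mem_left _ _ (Ideal.subset_span (Set.mem_insert _ _))
      · exact Ideal.zero_mem _
    have t5 : homogeneousComponent a f5 ∈
        Ideal.span {(X 2 : MvPolynomial (Fin 3) K) ^ c, (X 2 - X 0) ^ e} := by
      rw [← hB, hc_mul_homog hhzx]
      split_ifs
      · exact Ideal.mul_mem_left _ _ (Ideal.subset_span (Set.mem_insert_of_mem _ rfl))
      · exact Ideal.zero_mem _
    have t2 : homogeneousComponent a f2 ∈
        Ideal.span {(X 1 : MvPolynomial (Fin 3) K) ^ b, (X 1 - X 0) ^ d} := by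
      rw [← hp2, hc_mul_homog hhy]
      split_ifs
      · exact Ideal.mul_mem_left _ _ (Ideal.subset_span (Set.mem_insert _ _))
      · exact Ideal.zero_mem _
    have t4 : homogeneousComponent a f4 ∈
        Ideal.span {(X 1 : MvPolynomial (Fin 3) K) ^ b, (X 1 - X 0) ^ d} := by
      rw [← hp4, hc_mul_homog hhyx]
      split_ifs
      · exact Ideal.mul_mem_left _ _ (Ideal.subset_span (Set.mem_insert_of_mem _ rfl))
      · exact Ideal.zero_mem _
    have hJ1 : (X 0 : MvPolynomial (Fin 3) K) ^ a - C lam * X 0 ^ a ∈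
        Ideal.span {(X 2 : MvPolynomial (Fin 3) K) ^ c, (X 2 - X 0) ^ e} := by
      have e1' : f3 - f5 = (X 0 : MvPolynomial (Fin 3) K) ^ a - f1 := by
        linear_combination e1
      have hcomp : homogeneousComponent a f3 - homogeneousComponent a f5 =
          (X 0 : MvPolynomial (Fin 3) K) ^ a - C lam * X 0 ^ a := by
        rw [← map_sub, e1', map_sub, hxaa, hf1]
      rw [← hcomp]
      exact sub_mem t3 t5
    have hJ2 : C lam * (X 0 : MvPolynomial (Fin 3) K) ^ a ∈
        Ideal.span {(X 1 : MvPolynomial (Fin 3) K) ^ b, (X 1 - X 0) ^ d} := by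
      have e2' : f2 + f4 = f1 := by linear_combination -e2
      have hcomp : homogeneousComponent a f2 + homogeneousComponent a f4 =
          C lam * (X 0 : MvPolynomial (Fin 3) K) ^ a := by
        rw [← map_add, e2', hf1]
      rw [← hcomp]
      exact add_mem t2 t4
    by_cases hlam : lam = 1
    · exact x_pow_notmem (a := a) hb hd (by omega) 0 1 (by decide)
        (by simpa [hlam] using hJ2)
    · have hne : (1 : K) - lam ≠ 0 := sub_ne_zero.mpr (Ne.symm hlam)
      have heq : C (1 - lam) * (X 0 : MvPolynomial (Fin 3) K) ^ a =
          X 0 ^ a - C lam * X 0 ^ a := by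
        rw [map_sub, map_one]; ring
      have h' : C (1 - lam) * (X 0 : MvPolynomial (Fin 3) K) ^ a ∈
          Ideal.span {(X 2 : MvPolynomial (Fin 3) K) ^ c, (X 2 - X 0) ^ e} :=
        heq ▸ hJ1
      have hx : (X 0 : MvPolynomial (Fin 3) K) ^ a ∈
          Ideal.span {(X 2 : MvPolynomial (Fin 3) K) ^ c, (X 2 - X 0) ^ e} := by
        have : (X 0 : MvPolynomial (Fin 3) K) ^ a =
            C (1 - lam)⁻¹ * (C (1 - lam) * X 0 ^ a) := by
          rw [← mul_assoc, ← map_mul, inv_mul_cancel₀ hne, map_one, one_mul]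
        rw [this]
        exact Ideal.mul_mem_left _ _ h'
      exact x_pow_notmem (a := a) hc he (by omega) 0 2 (by decide) hx
  · -- easy direction
    intro hor u v hu hv
    rcases hor with hce | hbd
    · have hxa : (X 0 : MvPolynomial (Fin 3) K) ^ a ∈
          Ideal.span {(X 2 : MvPolynomial (Fin 3) K) ^ c, (X 2 - X 0) ^ e} :=
        mem_span_pow_pow _ _ he hce
      have hu' : u ∈ Ideal.span {(X 2 : MvPolynomial (Fin 3) K) ^ c, (X 2 - X 0) ^ e} := by
        refine Ideal.span_le.mpr ?_ hu
        rintro q (rfl | rfl | rfl)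
        · exact hxa
        · exact Ideal.subset_span (Set.mem_insert _ _)
        · exact Ideal.subset_span (Set.mem_insert_of_mem _ rfl)
      obtain ⟨p, w, hw, hvw⟩ := Ideal.mem_span_insert.mp hv
      obtain ⟨q, r, hqr⟩ := Ideal.mem_span_pair.mp hw
      have hu2 : u - p * (X 0 : MvPolynomial (Fin 3) K) ^ a ∈
          Ideal.span {(X 2 : MvPolynomial (Fin 3) K) ^ c, (X 2 - X 0) ^ e} :=
        sub_mem hu' (Ideal.mul_mem_left _ _ hxa)
      obtain ⟨A, B, hAB⟩ := Ideal.mem_span_pair.mp hu2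
      refine ⟨p * X 0 ^ a, -(q * X 1 ^ b), A * X 2 ^ c, -(r * (X 1 - X 0) ^ d),
        -(B * (X 2 - X 0) ^ e), ?_, ?_, ?_, ?_, ?_, ?_, ?_⟩
      · exact Ideal.mem_span_singleton'.mpr ⟨p, rfl⟩
      · exact neg_mem (Ideal.mem_span_singleton'.mpr ⟨q, rfl⟩)
      · exact Ideal.mem_span_singleton'.mpr ⟨A, rfl⟩
      · exact neg_mem (Ideal.mem_span_singleton'.mpr ⟨r, rfl⟩)
      · exact neg_mem (Ideal.mem_span_singleton'.mpr ⟨B, rfl⟩)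
      · linear_combination hAB
      · linear_combination hqr - hvw
    · have hxa : (X 0 : MvPolynomial (Fin 3) K) ^ a ∈
          Ideal.span {(X 1 : MvPolynomial (Fin 3) K) ^ b, (X 1 - X 0) ^ d} :=
        mem_span_pow_pow _ _ hd hbd
      have hv' : v ∈ Ideal.span {(X 1 : MvPolynomial (Fin 3) K) ^ b, (X 1 - X 0) ^ d} := by
        refine Ideal.span_le.mpr ?_ hv
        rintro q (rfl | rfl | rfl)
        · exact hxa
        · exact Ideal.subset_span (Set.mem_insert _ _)
        · exact Ideal.subset_span (Set.mem_insert_of_mem _ rfl)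
      obtain ⟨p, w, hw, huw⟩ := Ideal.mem_span_insert.mp hu
      obtain ⟨A, B, hAB⟩ := Ideal.mem_span_pair.mp hw
      have hv2 : v - p * (X 0 : MvPolynomial (Fin 3) K) ^ a ∈
          Ideal.span {(X 1 : MvPolynomial (Fin 3) K) ^ b, (X 1 - X 0) ^ d} :=
        sub_mem hv' (Ideal.mul_mem_left _ _ hxa)
      obtain ⟨q, r, hqr⟩ := Ideal.mem_span_pair.mp hv2
      refine ⟨p * X 0 ^ a, -(q * X 1 ^ b), A * X 2 ^ c, -(r * (X 1 - X 0) ^ d),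
        -(B * (X 2 - X 0) ^ e), ?_, ?_, ?_, ?_, ?_, ?_, ?_⟩
      · exact Ideal.mem_span_singleton'.mpr ⟨p, rfl⟩
      · exact neg_mem (Ideal.mem_span_singleton'.mpr ⟨q, rfl⟩)
      · exact Ideal.mem_span_singleton'.mpr ⟨A, rfl⟩
      · exact neg_mem (Ideal.mem_span_singleton'.mpr ⟨r, rfl⟩)
      · exact neg_mem (Ideal.mem_span_singleton'.mpr ⟨B, rfl⟩)
      · linear_combination hAB - huw
      · linear_combination hqr
end
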